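/- arXiv:2207.06123 — 2 statements merged into one kernel-verified Lean document; each statement's English description precedes it below -/
import Mathlib

section
/- Let A ∈ B(H₂, H₃) and B ∈ B(H₁, H₂) have closed ranges and suppose AB has closed range. Then AB(AB)† = A B B† A† if and only if A* A B B† = B B† A* A. -/
open ContinuousLinearMap

/-- `X` is the Moore-Penrose inverse of `A`: the four Penrose equations. -/
def IsMPInv {H₁ H₂ : Type*} [NormedAddCommGroup H₁] [InnerProductSpace ℂ H₁]
    [NormedAddCommGroup H₂] [InnerProductSpace ℂ H₂] [CompleteSpace H₁] [CompleteSpace H₂]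
    (A : H₁ →L[ℂ] H₂) (X : H₂ →L[ℂ] H₁) : Prop :=
  A ∘L X ∘L A = A ∧ X ∘L A ∘L X = X ∧
    ContinuousLinearMap.adjoint (A ∘L X) = A ∘L X ∧
    ContinuousLinearMap.adjoint (X ∘L A) = X ∘L A

/-!
Write `P = B B†` and `Q = A† A` for the two range projections, `M = A* A` and `S = A† A†*`,
so that `M S = S M = Q` and `M Q = M`; the operator `T = A B B† A† = A P A†` then has
adjoint `A (S P M) A†`.

If `M` commutes with `P` then so does `Q`, so `T` is self-adjoint with `E T = T` and `T E = E`
for the projection `E = AB (AB)†`, which forces `T = E`. Conversely, if `T = E`, then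
`E (AB) = AB` gives `M P Q P = M P`, hence `(P Q)² = P Q`, and in a C*-algebra this makes the
projections `P` and `Q` commute; self-adjointness of `T` gives `M P Q = Q P M`, which together
with `P Q = Q P` yields `M P = P M`.
-/

section StarRing

theorem IsSelfAdjoint.eq_of_mul_eq_of_mul_eq {R : Type*} [Mul R] [StarMul R] {e t : R}
    (he : IsSelfAdjoint e) (ht : IsSelfAdjoint t) (het : e * t = t) (hte : t * e = e) :
    e = t :=
  calc e = t * e := hte.symm
    _ = star (e * t) := by rw [star_mul, he.star_eq, ht.star_eq]
    _ = t := by rw [het, ht.star_eq]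

theorem Commute.left_of_mul_eq_of_mul_eq {R : Type*} [Semigroup R] {m p q s : R}
    (hmp : Commute m p) (hms : m * s = q) (hsm : s * m = q) (hmq : m * q = m) :
    Commute q p := by
  have hqm : q * m = m := by rw [← hms, mul_assoc, hsm, hmq]
  have hqpq_left : q * p * q = q * p :=
    calc q * p * q = s * m * p * q := by rw [hsm]
      _ = s * p * (m * q) := by rw [mul_assoc s m p, hmp.eq]; simp only [mul_assoc]
      _ = q * p := by rw [hmq, mul_assoc s, ← hmp.eq, ← mul_assoc, hsm]
  have hqpq_right : q * p * q = p * q :=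
    calc q * p * q = q * p * (m * s) := by rw [hms]
      _ = q * m * p * s := by rw [mul_assoc q m p, hmp.eq]; simp only [mul_assoc]
      _ = p * q := by rw [hqm, hmp.eq, mul_assoc, hms]
  exact hqpq_left.symm.trans hqpq_right

variable {R : Type*} [NonUnitalNormedRing R] [StarRing R] [CStarRing R]

theorem IsStarProjection.commute_of_isIdempotentElem_mul {p q : R}
    (hp : IsStarProjection p) (hq : IsStarProjection q) (hpq : IsIdempotentElem (p * q)) :
    Commute p q := by
  have hp2 (x : R) : p * (p * x) = p * x := by rw [← mul_assoc, hp.isIdempotentElem.eq]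
  have hq2 (x : R) : q * (q * x) = q * x := by rw [← mul_assoc, hq.isIdempotentElem.eq]
  have hpq2 : p * (q * (p * q)) = p * q := by simpa only [mul_assoc] using hpq.eq
  have hstar : star (p * q - q * (p * q)) = q * p - q * (p * q) := by
    simp only [star_sub, star_mul, hp.isSelfAdjoint.star_eq, hq.isSelfAdjoint.star_eq, mul_assoc]
  -- `p q = q p q` because `u = p q - q p q` satisfies `u⋆ u = 0`
  have hu : p * q - q * (p * q) = 0 := by
    refine (CStarRing.star_mul_self_eq_zero_iff _).mp ?_
    rw [hstar]
    simp only [sub_mul, mul_sub, mul_assoc, hp2, hq2, hpq2]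
    abel
  have hpq_eq : p * q = q * (p * q) := sub_eq_zero.mp hu
  have hqp_eq : q * p = q * (p * q) := by
    simpa only [star_mul, hp.isSelfAdjoint.star_eq, hq.isSelfAdjoint.star_eq, mul_assoc]
      using congrArg star hpq_eq
  exact hpq_eq.trans hqp_eq.symm

theorem IsSelfAdjoint.commute_of_mul_mul_eq_mul_mul {m p q s : R} (hm : IsSelfAdjoint m)
    (hp : IsStarProjection p) (hq : IsStarProjection q) (hms : m * s = q) (hmq : m * q = m)
    (hmpqp : m * p * q * p = m * p) (hmpq : m * p * q = q * p * m) : Commute m p := by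
  have hpqpm : p * q * p * m = p * m := by
    simpa only [star_mul, hm.star_eq, hp.isSelfAdjoint.star_eq, hq.isSelfAdjoint.star_eq,
      mul_assoc] using congrArg star hmpqp
  have hpq : Commute p q := hp.commute_of_isIdempotentElem_mul hq <| by
    simpa only [IsIdempotentElem, mul_assoc, hms] using congrArg (· * s) hpqpm
  have hmp : m * p = m * p * q := by rw [mul_assoc m p, hpq.eq, ← mul_assoc, hmq]
  have hpm : p * m = m * p * q := by
    simpa only [star_mul, hm.star_eq, hp.isSelfAdjoint.star_eq, hq.isSelfAdjoint.star_eq,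
      mul_assoc] using congrArg star (hmp.trans hmpq)
  exact hmp.trans hpm.symm

end StarRing

namespace IsMPInv

variable {H K : Type*} [NormedAddCommGroup H] [InnerProductSpace ℂ H] [CompleteSpace H]
  [NormedAddCommGroup K] [InnerProductSpace ℂ K] [CompleteSpace K]
  {A : H →L[ℂ] K} {Ad : K →L[ℂ] H}

theorem comp_inv_comp_comp (hA : IsMPInv A Ad) {G : Type*} [NormedAddCommGroup G]
    [NormedSpace ℂ G] (X : G →L[ℂ] H) : A ∘L Ad ∘L A ∘L X = A ∘L X := by
  simpa only [comp_assoc] using congrArg (· ∘L X) hA.1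

theorem inv_comp_inv_comp_comp (hA : IsMPInv A Ad) {G : Type*} [NormedAddCommGroup G]
    [NormedSpace ℂ G] (X : G →L[ℂ] K) : Ad ∘L A ∘L Ad ∘L X = Ad ∘L X := by
  simpa only [comp_assoc] using congrArg (· ∘L X) hA.2.1

theorem isStarProjection_comp_inv (hA : IsMPInv A Ad) : IsStarProjection (A ∘L Ad) where
  isIdempotentElem := by
    rw [IsIdempotentElem, mul_def, comp_assoc, hA.comp_inv_comp_comp]
  isSelfAdjoint := hA.2.2.1

theorem isStarProjection_inv_comp (hA : IsMPInv A Ad) : IsStarProjection (Ad ∘L A) where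
  isIdempotentElem := by
    rw [IsIdempotentElem, mul_def, comp_assoc, hA.inv_comp_inv_comp_comp]
  isSelfAdjoint := hA.2.2.2

theorem adjoint_eq (hA : IsMPInv A Ad) : adjoint A = adjoint A ∘L A ∘L Ad :=
  calc adjoint A = adjoint ((A ∘L Ad) ∘L A) := by rw [comp_assoc, hA.1]
    _ = adjoint A ∘L A ∘L Ad := by rw [adjoint_comp, hA.2.2.1]

theorem adjoint_inv_eq (hA : IsMPInv A Ad) : adjoint Ad = A ∘L Ad ∘L adjoint Ad :=
  calc adjoint Ad = adjoint (Ad ∘L A ∘L Ad) := by rw [hA.2.1]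
    _ = A ∘L Ad ∘L adjoint Ad := by rw [adjoint_comp, hA.2.2.1, comp_assoc]

theorem adjoint_comp_self_comp_inv_comp_adjoint (hA : IsMPInv A Ad) :
    (adjoint A ∘L A) ∘L (Ad ∘L adjoint Ad) = Ad ∘L A :=
  calc (adjoint A ∘L A) ∘L (Ad ∘L adjoint Ad) = (adjoint A ∘L A ∘L Ad) ∘L adjoint Ad := by
        simp only [comp_assoc]
    _ = Ad ∘L A := by rw [← hA.adjoint_eq, ← adjoint_comp, hA.2.2.2]

theorem inv_comp_adjoint_comp_adjoint_comp_self (hA : IsMPInv A Ad) :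
    (Ad ∘L adjoint Ad) ∘L (adjoint A ∘L A) = Ad ∘L A :=
  calc (Ad ∘L adjoint Ad) ∘L (adjoint A ∘L A) = Ad ∘L adjoint (A ∘L Ad) ∘L A := by
        rw [adjoint_comp]; simp only [comp_assoc]
    _ = Ad ∘L A := by rw [hA.2.2.1, ← comp_assoc, hA.2.1]

theorem adjoint_comp_self_comp_inv_comp (hA : IsMPInv A Ad) :
    (adjoint A ∘L A) ∘L (Ad ∘L A) = adjoint A ∘L A := by
  rw [comp_assoc, hA.1]

theorem adjoint_comp_comp_inv (hA : IsMPInv A Ad) (X : H →L[ℂ] H) :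
    adjoint (A ∘L X ∘L Ad) =
      A ∘L ((Ad ∘L adjoint Ad) ∘L adjoint X ∘L (adjoint A ∘L A)) ∘L Ad := by
  conv_lhs => rw [adjoint_comp, adjoint_comp, hA.adjoint_eq, hA.adjoint_inv_eq]
  simp only [comp_assoc]

end IsMPInv

section ReverseOrderLaw

variable {H₁ H₂ H₃ : Type*}
  [NormedAddCommGroup H₁] [InnerProductSpace ℂ H₁] [CompleteSpace H₁]
  [NormedAddCommGroup H₂] [InnerProductSpace ℂ H₂] [CompleteSpace H₂]
  [NormedAddCommGroup H₃] [InnerProductSpace ℂ H₃] [CompleteSpace H₃]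
  {A : H₂ →L[ℂ] H₃} {B : H₁ →L[ℂ] H₂}
  {Ad : H₃ →L[ℂ] H₂} {Bd : H₂ →L[ℂ] H₁} {ABd : H₃ →L[ℂ] H₁}

theorem commute_adjoint_comp_self_of_comp_inv_eq (hA : IsMPInv A Ad) (hB : IsMPInv B Bd)
    (hAB : IsMPInv (A ∘L B) ABd) (h : (A ∘L B) ∘L ABd = A ∘L B ∘L Bd ∘L Ad) :
    Commute (adjoint A ∘L A) (B ∘L Bd) := by
  have hM : IsSelfAdjoint (adjoint A ∘L A) := by
    rw [isSelfAdjoint_iff', adjoint_comp, adjoint_adjoint]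
  refine hM.commute_of_mul_mul_eq_mul_mul hB.isStarProjection_comp_inv
    hA.isStarProjection_inv_comp hA.adjoint_comp_self_comp_inv_comp_adjoint
    hA.adjoint_comp_self_comp_inv_comp ?_ ?_
  · have hAPQB : A ∘L (B ∘L Bd) ∘L (Ad ∘L A) ∘L B = A ∘L B := by
      have hEAB : ((A ∘L B) ∘L ABd) ∘L (A ∘L B) = A ∘L B := hAB.1
      simpa only [h, comp_assoc] using hEAB
    simpa only [mul_def, comp_assoc] using congrArg (fun X => adjoint A ∘L X ∘L Bd) hAPQB
  · have hT : adjoint (A ∘L (B ∘L Bd) ∘L Ad) = A ∘L (B ∘L Bd) ∘L Ad := by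
      simpa only [h, comp_assoc] using hAB.2.2.1
    rw [hA.adjoint_comp_comp_inv, hB.isStarProjection_comp_inv.isSelfAdjoint.adjoint_eq] at hT
    calc (adjoint A ∘L A) * (B ∘L Bd) * (Ad ∘L A)
        = adjoint A ∘L (A ∘L (B ∘L Bd) ∘L Ad) ∘L A := by simp only [mul_def, comp_assoc]
      _ = ((adjoint A ∘L A) ∘L (Ad ∘L adjoint Ad)) ∘L (B ∘L Bd) ∘L
            ((adjoint A ∘L A) ∘L (Ad ∘L A)) := by rw [← hT]; simp only [comp_assoc]
      _ = (Ad ∘L A) * (B ∘L Bd) * (adjoint A ∘L A) := by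
        rw [hA.adjoint_comp_self_comp_inv_comp_adjoint, hA.adjoint_comp_self_comp_inv_comp]; rfl

theorem comp_inv_eq_of_commute_adjoint_comp_self (hA : IsMPInv A Ad) (hB : IsMPInv B Bd)
    (hAB : IsMPInv (A ∘L B) ABd) (h : Commute (adjoint A ∘L A) (B ∘L Bd)) :
    (A ∘L B) ∘L ABd = A ∘L B ∘L Bd ∘L Ad := by
  have hMP : (adjoint A ∘L A) ∘L (B ∘L Bd) = (B ∘L Bd) ∘L (adjoint A ∘L A) := h.eq
  have hQP : (Ad ∘L A) ∘L (B ∘L Bd) = (B ∘L Bd) ∘L (Ad ∘L A) :=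
    (h.left_of_mul_eq_of_mul_eq hA.adjoint_comp_self_comp_inv_comp_adjoint
      hA.inv_comp_adjoint_comp_adjoint_comp_self hA.adjoint_comp_self_comp_inv_comp).eq
  have hSPM :
      (Ad ∘L adjoint Ad) ∘L (B ∘L Bd) ∘L (adjoint A ∘L A) = (Ad ∘L A) ∘L (B ∘L Bd) := by
    rw [← hMP, ← comp_assoc, hA.inv_comp_adjoint_comp_adjoint_comp_self]
  have hT : IsSelfAdjoint (A ∘L B ∘L Bd ∘L Ad) := by
    rw [isSelfAdjoint_iff']
    calc adjoint (A ∘L (B ∘L Bd) ∘L Ad)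
        = A ∘L ((Ad ∘L adjoint Ad) ∘L (B ∘L Bd) ∘L (adjoint A ∘L A)) ∘L Ad := by
          rw [hA.adjoint_comp_comp_inv, hB.isStarProjection_comp_inv.isSelfAdjoint.adjoint_eq]
      _ = A ∘L ((Ad ∘L A) ∘L (B ∘L Bd)) ∘L Ad := by rw [hSPM]
      _ = A ∘L B ∘L Bd ∘L Ad := by simp only [comp_assoc, hA.comp_inv_comp_comp]
  refine hAB.isStarProjection_comp_inv.isSelfAdjoint.eq_of_mul_eq_of_mul_eq hT ?_ ?_
  · calc ((A ∘L B) ∘L ABd) * (A ∘L B ∘L Bd ∘L Ad)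
        = ((A ∘L B) ∘L ABd ∘L (A ∘L B)) ∘L Bd ∘L Ad := by simp only [mul_def, comp_assoc]
      _ = A ∘L B ∘L Bd ∘L Ad := by rw [hAB.1, comp_assoc]
  · calc (A ∘L B ∘L Bd ∘L Ad) * ((A ∘L B) ∘L ABd)
        = A ∘L ((B ∘L Bd) ∘L (Ad ∘L A)) ∘L B ∘L ABd := by simp only [mul_def, comp_assoc]
      _ = (A ∘L B) ∘L ABd := by
          rw [← hQP]; simp only [comp_assoc, hA.comp_inv_comp_comp, hB.comp_inv_comp_comp]

end ReverseOrderLaw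

theorem stmt10_general {H₁ H₂ H₃ : Type*}
    [NormedAddCommGroup H₁] [InnerProductSpace ℂ H₁] [CompleteSpace H₁]
    [NormedAddCommGroup H₂] [InnerProductSpace ℂ H₂] [CompleteSpace H₂]
    [NormedAddCommGroup H₃] [InnerProductSpace ℂ H₃] [CompleteSpace H₃]
    (A : H₂ →L[ℂ] H₃) (B : H₁ →L[ℂ] H₂)
    (Ad : H₃ →L[ℂ] H₂) (Bd : H₂ →L[ℂ] H₁) (ABd : H₃ →L[ℂ] H₁)
    (hA : IsMPInv A Ad) (hB : IsMPInv B Bd) (hAB : IsMPInv (A ∘L B) ABd) :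
    (A ∘L B) ∘L ABd = A ∘L B ∘L Bd ∘L Ad ↔
      ContinuousLinearMap.adjoint A ∘L A ∘L B ∘L Bd = B ∘L Bd ∘L ContinuousLinearMap.adjoint A ∘L A :=
  ⟨fun h => (commute_adjoint_comp_self_of_comp_inv_eq hA hB hAB h).eq,
    fun h => comp_inv_eq_of_commute_adjoint_comp_self hA hB hAB h⟩

theorem stmt10 {H₁ H₂ H₃ : Type*}
    [NormedAddCommGroup H₁] [InnerProductSpace ℂ H₁] [CompleteSpace H₁]
    [NormedAddCommGroup H₂] [InnerProductSpace ℂ H₂] [CompleteSpace H₂]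
    [NormedAddCommGroup H₃] [InnerProductSpace ℂ H₃] [CompleteSpace H₃]
    (A : H₂ →L[ℂ] H₃) (B : H₁ →L[ℂ] H₂)
    (Ad : H₃ →L[ℂ] H₂) (Bd : H₂ →L[ℂ] H₁) (ABd : H₃ →L[ℂ] H₁)
    (hAcl : IsClosed (LinearMap.range (A : H₂ →ₗ[ℂ] H₃) : Set H₃))
    (hBcl : IsClosed (LinearMap.range (B : H₁ →ₗ[ℂ] H₂) : Set H₂))
    (hABcl : IsClosed (LinearMap.range (A ∘L B : H₁ →ₗ[ℂ] H₃) : Set H₃))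
    (hA : IsMPInv A Ad) (hB : IsMPInv B Bd) (hAB : IsMPInv (A ∘L B) ABd) :
    (A ∘L B) ∘L ABd = A ∘L B ∘L Bd ∘L Ad ↔
      ContinuousLinearMap.adjoint A ∘L A ∘L B ∘L Bd = B ∘L Bd ∘L ContinuousLinearMap.adjoint A ∘L A :=
  stmt10_general A B Ad Bd ABd hA hB hAB
end

section
/- Let A ∈ B(H₂, H₃) and B ∈ B(H₁, H₂) have closed ranges and suppose AB has closed range. Then (AB)† = B† A† if and only if both B B† A* A B = A* A B and A B B* = A B B* A† A hold. -/
/-!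
Write `P = B B†` and `Q = A† A`; these are the orthogonal projections onto `ran B` and
`ran A*`. The two conditions say exactly that `P` commutes with `A* A` and `Q` commutes with
`B B*`. Since `P = B B* (B†)* B†`, the second commutation makes `P` and `Q` commute, and then the
four Penrose equations for `B† A†` reduce to those of `A†` and `B†`; uniqueness of the
Moore-Penrose inverse finishes one direction.

Conversely, if `B† A†` is the Moore-Penrose inverse of `A B`, the Penrose equations give
`Q P (A* A B x) = A* A B x`. As `Q` is a contraction, `‖P y‖ ≥ ‖y‖` for `y = A* A B x`, which
forces `P y = y` because `P` is an orthogonal projection. The second condition follows dually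
from `P Q (B B* A* z) = B B* A* z`.
-/

open ContinuousLinearMap

theorem IsStarProjection.apply_eq_self_of_apply_apply_eq {𝕜 E : Type*} [RCLike 𝕜]
    [NormedAddCommGroup E] [InnerProductSpace 𝕜 E] [CompleteSpace E] {p q : E →L[𝕜] E}
    (hp : IsStarProjection p) (hq : ‖q‖ ≤ 1) {x : E} (h : q (p x) = x) : p x = x := by
  obtain ⟨K, _, rfl⟩ := isStarProjection_iff_eq_starProjection.mp hp
  rw [Submodule.starProjection_eq_self_iff, K.mem_iff_norm_starProjection]
  refine le_antisymm (K.norm_starProjection_apply_le x) ?_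
  calc ‖x‖ = ‖q (K.starProjection x)‖ := by rw [h]
    _ ≤ ‖K.starProjection x‖ := q.le_of_opNorm_le hq _ |>.trans_eq (one_mul _)

theorem IsSelfAdjoint.commute_of_mul_mul_eq {R : Type*} [Semigroup R] [StarMul R] {p s : R}
    (hp : IsSelfAdjoint p) (hs : IsSelfAdjoint s) (h : p * s * p = s * p) : Commute p s := by
  have h' : p * s * p = p * s := by
    simpa only [star_mul, hp.star_eq, hs.star_eq, mul_assoc] using congrArg star h
  exact h'.symm.trans h

theorem IsSelfAdjoint.comp_eq_left_iff {𝕜 E F : Type*} [RCLike 𝕜]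
    [NormedAddCommGroup E] [InnerProductSpace 𝕜 E] [CompleteSpace E]
    [NormedAddCommGroup F] [InnerProductSpace 𝕜 F] [CompleteSpace F]
    {S : E →L[𝕜] F} {Q : E →L[𝕜] E} (hQ : IsSelfAdjoint Q) :
    S ∘L Q = S ↔ Q ∘L adjoint S = adjoint S := by
  constructor <;> intro h
  · rw [← hQ.adjoint_eq, ← adjoint_comp, h]
  · calc S ∘L Q = adjoint (Q ∘L adjoint S) := by rw [adjoint_comp, adjoint_adjoint, hQ.adjoint_eq]
      _ = S := by rw [h, adjoint_adjoint]

namespace IsMPInv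

variable {E F G : Type*} [NormedAddCommGroup E] [InnerProductSpace ℂ E] [CompleteSpace E]
  [NormedAddCommGroup F] [InnerProductSpace ℂ F] [CompleteSpace F]
  [NormedAddCommGroup G] [InnerProductSpace ℂ G] [CompleteSpace G]
  {A : E →L[ℂ] F} {X : F →L[ℂ] E}

theorem apply_inv_apply (h : IsMPInv A X) (x : E) : A (X (A x)) = A x :=
  DFunLike.congr_fun h.1 x

theorem inv_apply_inv (h : IsMPInv A X) (y : F) : X (A (X y)) = X y :=
  DFunLike.congr_fun h.2.1 y

theorem adjoint_inv_apply_adjoint_apply (h : IsMPInv A X) (y : F) :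
    adjoint X (adjoint A y) = A (X y) := by
  rw [← comp_apply, ← adjoint_comp, h.2.2.1, comp_apply]

theorem adjoint_apply_adjoint_inv_apply (h : IsMPInv A X) (x : E) :
    adjoint A (adjoint X x) = X (A x) := by
  rw [← comp_apply, ← adjoint_comp, h.2.2.2, comp_apply]

theorem adjoint_apply_adjoint_inv_adjoint_apply (h : IsMPInv A X) (y : F) :
    adjoint A (adjoint X (adjoint A y)) = adjoint A y := by
  simpa only [adjoint_comp, comp_apply] using DFunLike.congr_fun (congrArg adjoint h.1) y

theorem inv_apply_adjoint_apply (h : IsMPInv A X) (y : F) : X (A (adjoint A y)) = adjoint A y := by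
  rw [← h.adjoint_apply_adjoint_inv_apply, h.adjoint_apply_adjoint_inv_adjoint_apply]

theorem adjoint_apply_apply_inv (h : IsMPInv A X) (y : F) : adjoint A (A (X y)) = adjoint A y := by
  rw [← h.adjoint_inv_apply_adjoint_apply, h.adjoint_apply_adjoint_inv_adjoint_apply]

theorem adjoint_inv_adjoint_apply_apply (h : IsMPInv A X) (x : E) :
    adjoint X (adjoint A (A x)) = A x := by
  rw [h.adjoint_inv_apply_adjoint_apply, h.apply_inv_apply]

theorem isStarProjection_comp (h : IsMPInv A X) : IsStarProjection (A ∘L X) :=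
  ⟨ContinuousLinearMap.ext fun y => congrArg A (h.inv_apply_inv y), h.2.2.1⟩

theorem isStarProjection_inv_comp_s13 (h : IsMPInv A X) : IsStarProjection (X ∘L A) :=
  ⟨ContinuousLinearMap.ext fun x => congrArg X (h.apply_inv_apply x), h.2.2.2⟩

theorem unique {Y : F →L[ℂ] E} (hX : IsMPInv A X) (hY : IsMPInv A Y) : X = Y := by
  have hAX (y : F) : A (X y) = A (Y y) := calc
    A (X y) = adjoint X (adjoint A (A (Y y))) := by
      rw [hY.adjoint_apply_apply_inv, hX.adjoint_inv_apply_adjoint_apply]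
    _ = A (Y y) := by rw [hX.adjoint_inv_apply_adjoint_apply, hX.apply_inv_apply]
  have hXA (x : E) : X (A x) = Y (A x) := calc
    X (A x) = Y (A (adjoint A (adjoint X x))) := by
      rw [hY.inv_apply_adjoint_apply, hX.adjoint_apply_adjoint_inv_apply]
    _ = Y (A x) := by rw [hX.adjoint_apply_adjoint_inv_apply, hX.apply_inv_apply]
  ext y
  calc X y = X (A (X y)) := (hX.inv_apply_inv y).symm
    _ = Y (A (Y y)) := by rw [hAX, hXA]
    _ = Y y := hY.inv_apply_inv y

theorem commute_comp_inv {Q : F →L[ℂ] F} (h : IsMPInv A X) (hQ : IsSelfAdjoint Q)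
    (hc : Commute Q (A ∘L adjoint A)) : Commute (A ∘L X) Q := by
  refine h.isStarProjection_comp.isSelfAdjoint.commute_of_mul_mul_eq hQ ?_
  have hc' (z : F) : Q (A (adjoint A z)) = A (adjoint A (Q z)) := DFunLike.congr_fun hc.eq z
  ext y
  -- `A X = A A* X* X`, and `Q` commutes past `A A*`.
  show A (X (Q (A (X y)))) = Q (A (X y))
  calc A (X (Q (A (X y)))) = A (X (A (adjoint A (Q (adjoint X (X y)))))) := by
        rw [← hc', h.adjoint_apply_adjoint_inv_apply, h.apply_inv_apply]
    _ = Q (A (X y)) := by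
        rw [h.apply_inv_apply, ← hc', h.adjoint_apply_adjoint_inv_apply, h.apply_inv_apply]

theorem isSelfAdjoint_comp_comp_inv {P : E →L[ℂ] E} (h : IsMPInv A X) (hP : IsSelfAdjoint P)
    (hc : Commute P (adjoint A ∘L A)) : IsSelfAdjoint (A ∘L P ∘L X) := by
  have hc' (x : E) : P (adjoint A (A x)) = adjoint A (A (P x)) := DFunLike.congr_fun hc.eq x
  refine ContinuousLinearMap.isSelfAdjoint_iff'.2 (ContinuousLinearMap.ext fun y => ?_)
  simp only [adjoint_comp, comp_apply, hP.adjoint_eq]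
  calc adjoint X (P (adjoint A y)) = adjoint X (adjoint A (A (P (X y)))) := by
        rw [← hc', h.adjoint_apply_apply_inv]
    _ = A (P (X y)) := by rw [h.adjoint_inv_apply_adjoint_apply, h.apply_inv_apply]

theorem isSelfAdjoint_inv_comp_comp {Q : F →L[ℂ] F} (h : IsMPInv A X) (hQ : IsSelfAdjoint Q)
    (hc : Commute Q (A ∘L adjoint A)) : IsSelfAdjoint (X ∘L Q ∘L A) := by
  have hc' (z : F) : Q (A (adjoint A z)) = A (adjoint A (Q z)) := DFunLike.congr_fun hc.eq z
  refine ContinuousLinearMap.isSelfAdjoint_iff'.2 (ContinuousLinearMap.ext fun x => ?_)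
  simp only [adjoint_comp, comp_apply, hQ.adjoint_eq]
  calc adjoint A (Q (adjoint X x)) = X (A (adjoint A (Q (adjoint X x)))) :=
        (h.inv_apply_adjoint_apply _).symm
    _ = X (Q (A x)) := by rw [← hc', h.adjoint_apply_adjoint_inv_apply, h.apply_inv_apply]

theorem comp {B : G →L[ℂ] E} {Y : E →L[ℂ] G} (hA : IsMPInv A X) (hB : IsMPInv B Y)
    (hPQ : Commute (B ∘L Y) (X ∘L A)) (hP : Commute (B ∘L Y) (adjoint A ∘L A))
    (hQ : Commute (X ∘L A) (B ∘L adjoint B)) : IsMPInv (A ∘L B) (Y ∘L X) := by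
  have hPQ' (x : E) : B (Y (X (A x))) = X (A (B (Y x))) := DFunLike.congr_fun hPQ.eq x
  refine ⟨ContinuousLinearMap.ext fun z => ?_, ContinuousLinearMap.ext fun y => ?_, ?_, ?_⟩
  · show A (B (Y (X (A (B z))))) = A (B z)
    rw [hPQ', hB.apply_inv_apply, hA.apply_inv_apply]
  · show Y (X (A (B (Y (X y))))) = Y (X y)
    rw [← hPQ', hA.inv_apply_inv, hB.inv_apply_inv]
  · simpa only [comp_assoc] using
      (hA.isSelfAdjoint_comp_comp_inv hB.isStarProjection_comp.2 hP).adjoint_eq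
  · simpa only [comp_assoc] using
      (hB.isSelfAdjoint_inv_comp_comp hA.isStarProjection_inv_comp_s13.2 hQ).adjoint_eq

theorem comp_inv_comp_adjoint_comp_comp_eq {B : G →L[ℂ] E} {Y : E →L[ℂ] G}
    (hA : IsMPInv A X) (hB : IsMPInv B Y) (hAB : IsMPInv (A ∘L B) (Y ∘L X)) :
    B ∘L Y ∘L adjoint A ∘L A ∘L B = adjoint A ∘L A ∘L B := by
  refine ContinuousLinearMap.ext fun x => hB.isStarProjection_comp.apply_eq_self_of_apply_apply_eq
    hA.isStarProjection_inv_comp_s13.norm_le ?_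
  have hC : adjoint X (adjoint Y (adjoint B (adjoint A (A (B x))))) = A (B x) := by
    simpa only [adjoint_comp, comp_apply] using hAB.adjoint_inv_adjoint_apply_apply x
  show X (A (B (Y (adjoint A (A (B x)))))) = adjoint A (A (B x))
  rw [← hB.adjoint_inv_apply_adjoint_apply, ← hA.adjoint_apply_adjoint_inv_apply, hC]

theorem comp_comp_adjoint_eq_comp_comp_adjoint_comp_inv_comp {B : G →L[ℂ] E} {Y : E →L[ℂ] G}
    (hA : IsMPInv A X) (hB : IsMPInv B Y) (hAB : IsMPInv (A ∘L B) (Y ∘L X)) :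
    A ∘L B ∘L adjoint B = A ∘L B ∘L adjoint B ∘L X ∘L A := by
  have hQ (z : F) : X (A (B (adjoint B (adjoint A z)))) = B (adjoint B (adjoint A z)) := by
    refine hA.isStarProjection_inv_comp_s13.apply_eq_self_of_apply_apply_eq
      hB.isStarProjection_comp.norm_le ?_
    have hC := hAB.inv_apply_adjoint_apply z
    simp only [adjoint_comp, comp_apply] at hC
    show B (Y (X (A (B (adjoint B (adjoint A z)))))) = B (adjoint B (adjoint A z))
    rw [hC]
  have := hA.isStarProjection_inv_comp_s13.isSelfAdjoint.comp_eq_left_iff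
    (S := A ∘L B ∘L adjoint B) |>.2 (ContinuousLinearMap.ext fun z => by
      simpa only [adjoint_comp, adjoint_adjoint, comp_apply] using hQ z)
  simpa only [comp_assoc] using this.symm

end IsMPInv

theorem stmt13_general {H₁ H₂ H₃ : Type*}
    [NormedAddCommGroup H₁] [InnerProductSpace ℂ H₁] [CompleteSpace H₁]
    [NormedAddCommGroup H₂] [InnerProductSpace ℂ H₂] [CompleteSpace H₂]
    [NormedAddCommGroup H₃] [InnerProductSpace ℂ H₃] [CompleteSpace H₃]
    (A : H₂ →L[ℂ] H₃) (B : H₁ →L[ℂ] H₂)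
    (Ad : H₃ →L[ℂ] H₂) (Bd : H₂ →L[ℂ] H₁) (ABd : H₃ →L[ℂ] H₁)
    (hA : IsMPInv A Ad) (hB : IsMPInv B Bd) (hAB : IsMPInv (A ∘L B) ABd) :
    ABd = Bd ∘L Ad ↔
      (B ∘L Bd ∘L ContinuousLinearMap.adjoint A ∘L A ∘L B = ContinuousLinearMap.adjoint A ∘L A ∘L B ∧
        A ∘L B ∘L ContinuousLinearMap.adjoint B = A ∘L B ∘L ContinuousLinearMap.adjoint B ∘L Ad ∘L A) := by
  constructor
  · rintro rfl
    exact ⟨hA.comp_inv_comp_adjoint_comp_comp_eq hB hAB,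
      hA.comp_comp_adjoint_eq_comp_comp_adjoint_comp_inv_comp hB hAB⟩
  rintro ⟨h₁, h₂⟩
  have hQ := hA.isStarProjection_inv_comp_s13.isSelfAdjoint
  have hP : Commute (B ∘L Bd) (adjoint A ∘L A) :=
    hB.isStarProjection_comp.isSelfAdjoint.commute_of_mul_mul_eq
      (isPositive_adjoint_comp_self A).isSelfAdjoint
      (ContinuousLinearMap.ext fun x => DFunLike.congr_fun h₁ (Bd x))
  have h₂' := (hQ.comp_eq_left_iff (S := A ∘L B ∘L adjoint B)).1
    (by simpa only [comp_assoc] using h₂.symm)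
  have hQB : Commute (Ad ∘L A) (B ∘L adjoint B) :=
    hQ.commute_of_mul_mul_eq (isPositive_self_comp_adjoint B).isSelfAdjoint
      (ContinuousLinearMap.ext fun x => by
        simpa only [adjoint_comp, adjoint_adjoint, comp_apply, mul_apply_eq_comp,
          hA.adjoint_apply_adjoint_inv_apply] using DFunLike.congr_fun h₂' (adjoint Ad x))
  exact hAB.unique (hA.comp hB (hB.commute_comp_inv hQ hQB) hP hQB)

theorem stmt13 {H₁ H₂ H₃ : Type*}
    [NormedAddCommGroup H₁] [InnerProductSpace ℂ H₁] [CompleteSpace H₁]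
    [NormedAddCommGroup H₂] [InnerProductSpace ℂ H₂] [CompleteSpace H₂]
    [NormedAddCommGroup H₃] [InnerProductSpace ℂ H₃] [CompleteSpace H₃]
    (A : H₂ →L[ℂ] H₃) (B : H₁ →L[ℂ] H₂)
    (Ad : H₃ →L[ℂ] H₂) (Bd : H₂ →L[ℂ] H₁) (ABd : H₃ →L[ℂ] H₁)
    (hAcl : IsClosed (LinearMap.range (A : H₂ →ₗ[ℂ] H₃) : Set H₃))
    (hBcl : IsClosed (LinearMap.range (B : H₁ →ₗ[ℂ] H₂) : Set H₂))
    (hABcl : IsClosed (LinearMap.range ((A ∘L B : H₁ →L[ℂ] H₃) : H₁ →ₗ[ℂ] H₃) : Set H₃))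
    (hA : IsMPInv A Ad) (hB : IsMPInv B Bd) (hAB : IsMPInv (A ∘L B) ABd) :
    ABd = Bd ∘L Ad ↔
      (B ∘L Bd ∘L ContinuousLinearMap.adjoint A ∘L A ∘L B = ContinuousLinearMap.adjoint A ∘L A ∘L B ∧
        A ∘L B ∘L ContinuousLinearMap.adjoint B = A ∘L B ∘L ContinuousLinearMap.adjoint B ∘L Ad ∘L A) :=
  stmt13_general A B Ad Bd ABd hA hB hAB
end
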